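/- arXiv:2402.15016 — 2 statements merged into one kernel-verified Lean document; each statement's English description precedes it below -/
import Mathlib

section
/- Let h : ℝⁿ → ℝ be convex and differentiable with L-Lipschitz gradient, L > 0. Let Y ⊆ ℝⁿ be nonempty closed convex and X* ⊆ Y nonempty closed convex. Let v ∈ ℝⁿ satisfy h(v) > 0 and R_v > 0, set v̄ = Π_{X*}(v) and assume h(v̄) ≤ 0. Let β ∈ (0,1) and B_h > 0 with ‖∇h(v)‖ ≤ B_h. Define z = v − β·(h(v)/p_v)·∇h(v) and x⁺ = Π_Y(z). Then dist²(x⁺, X*) ≤ ‖v − v̄‖² − (2β(1 − β)/B_h²)·h(v)². -/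
/-!
Write `g = ‖∇h(v)‖` and `τ = h(v)/p_v`, so that `z = v - βτ∇h(v)`. Since `‖v - c_v‖ = g/L`,
`τg² = (g - L√R_v)g/L`, and `(L√R_v)² = g² - 2Lh(v)` places this in `[h(v), 2h(v)]`.
Projecting onto `Y ⊇ X*` does not increase the distance to `v̄`, and convexity together with
`h(v̄) ≤ 0` gives `⟨∇h(v), v - v̄⟩ ≥ h(v)`. Expanding `‖z - v̄‖²` therefore leaves
`‖v - v̄‖² - 2βτh(v) + β²τ²g² ≤ ‖v - v̄‖² - 2β(1-β)τh(v)`, and `τ ≥ h(v)/g² ≥ h(v)/B_h²`.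
-/

open Metric

/-- The center of the ball associated with the quadratic upper approximation
of `h` at `v` with parameter `L`: `c_v = v - (1/L) ∇h(v)`. -/
noncomputable def ballCenter {n : ℕ} (h : EuclideanSpace ℝ (Fin n) → ℝ) (L : ℝ)
    (v : EuclideanSpace ℝ (Fin n)) : EuclideanSpace ℝ (Fin n) :=
  v - (1 / L) • gradient h v

/-- The radius term `R_v = ‖∇h(v)‖²/L² - 2 h(v)/L`. -/
noncomputable def ballRadius {n : ℕ} (h : EuclideanSpace ℝ (Fin n) → ℝ) (L : ℝ)
    (v : EuclideanSpace ℝ (Fin n)) : ℝ :=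
  ‖gradient h v‖ ^ 2 / L ^ 2 - 2 * h v / L

/-- The adaptive parameter `p_v = ((h(v))₊ L) / (1 - √((R_v)₊)/‖v - c_v‖)`,
where division by zero is interpreted as zero (Lean's convention). -/
noncomputable def adaptP {n : ℕ} (h : EuclideanSpace ℝ (Fin n) → ℝ) (L : ℝ)
    (v : EuclideanSpace ℝ (Fin n)) : ℝ :=
  max (h v) 0 * L /
    (1 - Real.sqrt (max (ballRadius h L v) 0) / ‖v - ballCenter h L v‖)

open scoped InnerProductSpace

section InnerProductSpace

variable {E : Type*} [NormedAddCommGroup E] [InnerProductSpace ℝ E]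

theorem ConvexOn.sub_le_inner_gradient [CompleteSpace E] {f : E → ℝ}
    (hf : ConvexOn ℝ Set.univ f) {x : E} (hfx : DifferentiableAt ℝ f x) (y : E) :
    f x - f y ≤ ⟪gradient f x, x - y⟫_ℝ := by
  have hline : ConvexOn ℝ Set.univ (f ∘ AffineMap.lineMap (k := ℝ) x y) := by
    simpa using hf.comp_affineMap (AffineMap.lineMap x y)
  have hfx' : HasFDerivAt f (fderiv ℝ f x) (AffineMap.lineMap x y (0 : ℝ)) := by
    simpa using hfx.hasFDerivAt
  have hderiv : HasDerivAt (f ∘ AffineMap.lineMap (k := ℝ) x y) ⟪gradient f x, y - x⟫_ℝ 0 := by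
    rw [inner_gradient_left]
    exact hfx'.comp_hasDerivAt 0 AffineMap.hasDerivAt_lineMap
  have hslope := hline.le_slope_of_hasDerivAt (Set.mem_univ 0) (Set.mem_univ 1) one_pos hderiv
  simp only [slope_def_field, Function.comp_apply, AffineMap.lineMap_apply_one,
    AffineMap.lineMap_apply_zero, sub_zero, div_one] at hslope
  rw [← neg_sub y x, inner_neg_right]
  linarith

theorem norm_sub_le_of_forall_norm_sub_le {K : Set E} (hK : Convex ℝ K) {z p : E} (hp : p ∈ K)
    (hmin : ∀ y ∈ K, ‖z - p‖ ≤ ‖z - y‖) {y : E} (hy : y ∈ K) : ‖p - y‖ ≤ ‖z - y‖ := by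
  have : Nonempty K := ⟨⟨p, hp⟩⟩
  have hbdd : BddBelow (Set.range fun w : K => ‖z - w‖) :=
    ⟨0, Set.forall_mem_range.2 fun _ => norm_nonneg _⟩
  have hinf : ‖z - p‖ = ⨅ w : K, ‖z - w‖ :=
    le_antisymm (le_ciInf fun w => hmin w w.2) (ciInf_le hbdd ⟨p, hp⟩)
  have hvar := (norm_eq_iInf_iff_real_inner_le_zero hK hp).mp hinf y hy
  have hsplit : z - y = (z - p) + (p - y) := by abel
  rw [← pow_le_pow_iff_left₀ (norm_nonneg _) (norm_nonneg _) two_ne_zero, hsplit,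
    norm_add_sq_real, ← neg_sub y p, inner_neg_right]
  nlinarith [sq_nonneg ‖z - p‖]

theorem norm_sub_smul_sub_sq_le {u G w : E} {t a : ℝ} (ht : 0 ≤ t) (ha : a ≤ ⟪G, u - w⟫_ℝ) :
    ‖u - t • G - w‖ ^ 2 ≤ ‖u - w‖ ^ 2 - 2 * t * a + t ^ 2 * ‖G‖ ^ 2 := by
  rw [sub_right_comm, norm_sub_sq_real, real_inner_smul_right, norm_smul, real_inner_comm,
    Real.norm_of_nonneg ht]
  nlinarith [mul_le_mul_of_nonneg_left ha ht]

end InnerProductSpace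

theorem sub_mul_mem_Icc_of_sq_eq {a b g : ℝ} (ha : 0 ≤ a) (hb : 0 ≤ b) (hg : 0 ≤ g)
    (hbg : b ^ 2 = g ^ 2 - 2 * a) : (g - b) * g ∈ Set.Icc a (2 * a) := by
  have hb_le : b ≤ g := (pow_le_pow_iff_left₀ hb hg two_ne_zero).mp (by linarith)
  constructor
  · nlinarith [sq_nonneg (g - b)]
  · nlinarith [mul_le_mul_of_nonneg_left hb_le hb]

theorem neg_two_mul_add_sq_le {β a t g B : ℝ} (hβ0 : 0 < β) (hβ1 : β < 1) (hg : 0 ≤ g)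
    (hgB : g ≤ B) (hlow : β * a ≤ t * g ^ 2) (hup : t * g ^ 2 ≤ 2 * β * a) :
    -2 * t * a + t ^ 2 * g ^ 2 ≤ -(2 * β * (1 - β) / B ^ 2 * a ^ 2) := by
  have ha : 0 ≤ a := by nlinarith
  rcases ha.eq_or_lt with rfl | ha
  · have h0 : t * g ^ 2 = 0 := by linarith
    have : t ^ 2 * g ^ 2 = t * (t * g ^ 2) := by ring
    simp [this, h0]
  have hg : 0 < g := hg.lt_of_ne (by rintro rfl; linarith [mul_pos hβ0 ha])
  have ht : 0 < t := by nlinarith [pow_pos hg 2]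
  have hgB2 : g ^ 2 ≤ B ^ 2 := pow_le_pow_left₀ hg.le hgB 2
  have hstep : t ^ 2 * g ^ 2 ≤ 2 * β * t * a := by
    nlinarith [mul_le_mul_of_nonneg_left hup ht.le]
  have hgain : 2 * β * (1 - β) / B ^ 2 * a ^ 2 ≤ 2 * (1 - β) * t * a := by
    rw [div_mul_eq_mul_div, div_le_iff₀ (pow_pos (hg.trans_le hgB) 2)]
    nlinarith [mul_le_mul_of_nonneg_left hgB2 ht.le, mul_pos ha (by linarith : (0:ℝ) < 1 - β)]
  linarith

theorem div_adaptP_mul_norm_gradient_sq_mem_Icc {n : ℕ} {h : EuclideanSpace ℝ (Fin n) → ℝ}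
    {L : ℝ} {v : EuclideanSpace ℝ (Fin n)} (hL : 0 < L) (hv : 0 < h v)
    (hR : 0 < ballRadius h L v) :
    h v / adaptP h L v * ‖gradient h v‖ ^ 2 ∈ Set.Icc (h v) (2 * h v) := by
  set g := ‖gradient h v‖
  set s := Real.sqrt (ballRadius h L v)
  have hg : 0 < g := by
    refine (norm_nonneg _).lt_of_ne' fun hg0 => hR.not_ge ?_
    rw [ballRadius, hg0]
    have : 0 < 2 * h v / L := by positivity
    linarith [show (0 : ℝ) ^ 2 / L ^ 2 = 0 by simp]
  have hdist : ‖v - ballCenter h L v‖ = g / L := by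
    rw [ballCenter, sub_sub_cancel, norm_smul, Real.norm_of_nonneg (by positivity)]
    ring
  have hstep : h v / adaptP h L v * g ^ 2 = (g - s * L) * g / L := by
    rw [adaptP, max_eq_left hv.le, max_eq_left hR.le, hdist]
    field_simp
    rfl
  have hsL : (s * L) ^ 2 = g ^ 2 - 2 * (h v * L) := by
    rw [mul_pow, Real.sq_sqrt hR.le, ballRadius]
    field_simp
    ring
  obtain ⟨hlow, hup⟩ := sub_mul_mem_Icc_of_sq_eq (by positivity) (by positivity) hg.le hsL
  rw [hstep]
  constructor
  · rw [le_div_iff₀ hL]; exact hlow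
  · rw [div_le_iff₀ hL]; linarith

theorem stmt_8_general {n : ℕ} (h : EuclideanSpace ℝ (Fin n) → ℝ)
    (hconv : ConvexOn ℝ Set.univ h) (hdiff : Differentiable ℝ h)
    (L : ℝ) (hL : 0 < L)
    (Y Xstar : Set (EuclideanSpace ℝ (Fin n)))
    (hYcv : Convex ℝ Y)
    (hXsY : Xstar ⊆ Y)
    (v : EuclideanSpace ℝ (Fin n)) (hv : 0 < h v) (hR : 0 < ballRadius h L v)
    -- `vbar = Π_{X*}(v)` : projection of `v` onto `X*`
    (vbar : EuclideanSpace ℝ (Fin n)) (hvbarmem : vbar ∈ Xstar)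
    (hfeas : h vbar ≤ 0)
    (β : ℝ) (hβ : β ∈ Set.Ioo (0 : ℝ) 1)
    (Bh : ℝ) (hgradbd : ‖gradient h v‖ ≤ Bh)
    (z : EuclideanSpace ℝ (Fin n))
    (hz : z = v - (β * (h v / adaptP h L v)) • gradient h v)
    -- `xplus = Π_Y(z)` : projection of `z` onto `Y`
    (xplus : EuclideanSpace ℝ (Fin n)) (hxpmem : xplus ∈ Y)
    (hxpproj : ∀ y ∈ Y, ‖z - xplus‖ ≤ ‖z - y‖) :
    (infDist xplus Xstar) ^ 2
      ≤ ‖v - vbar‖ ^ 2 - 2 * β * (1 - β) / Bh ^ 2 * (h v) ^ 2 := by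
  obtain ⟨hβ0, hβ1⟩ := hβ
  set τ := h v / adaptP h L v
  obtain ⟨hlow, hup⟩ := div_adaptP_mul_norm_gradient_sq_mem_Icc hL hv hR
  have hτ : 0 ≤ τ := by nlinarith [sq_nonneg ‖gradient h v‖]
  have hinner : h v ≤ ⟪gradient h v, v - vbar⟫_ℝ := by
    linarith [hconv.sub_le_inner_gradient (hdiff v) vbar]
  have hdist : infDist xplus Xstar ≤ ‖z - vbar‖ := by
    refine (infDist_le_dist_of_mem hvbarmem).trans ?_
    rw [dist_eq_norm]
    exact norm_sub_le_of_forall_norm_sub_le hYcv hxpmem hxpproj (hXsY hvbarmem)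
  have hgain := neg_two_mul_add_sq_le (a := h v) (t := β * τ) hβ0 hβ1 (norm_nonneg _) hgradbd
    (by linarith [mul_le_mul_of_nonneg_left hlow hβ0.le])
    (by linarith [mul_le_mul_of_nonneg_left hup hβ0.le])
  calc infDist xplus Xstar ^ 2 ≤ ‖z - vbar‖ ^ 2 := pow_le_pow_left₀ infDist_nonneg hdist 2
    _ ≤ ‖v - vbar‖ ^ 2 - 2 * (β * τ) * h v + (β * τ) ^ 2 * ‖gradient h v‖ ^ 2 :=
      hz ▸ norm_sub_smul_sub_sq_le (by positivity) hinner
    _ ≤ ‖v - vbar‖ ^ 2 - 2 * β * (1 - β) / Bh ^ 2 * h v ^ 2 := by linarith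

theorem stmt_8 {n : ℕ} (h : EuclideanSpace ℝ (Fin n) → ℝ)
    (hconv : ConvexOn ℝ Set.univ h) (hdiff : Differentiable ℝ h)
    (L : ℝ) (hL : 0 < L)
    (hLip : ∀ x y, ‖gradient h x - gradient h y‖ ≤ L * ‖x - y‖)
    (Y Xstar : Set (EuclideanSpace ℝ (Fin n)))
    (hYne : Y.Nonempty) (hYcl : IsClosed Y) (hYcv : Convex ℝ Y)
    (hXsne : Xstar.Nonempty) (hXscl : IsClosed Xstar) (hXscv : Convex ℝ Xstar)
    (hXsY : Xstar ⊆ Y)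
    (v : EuclideanSpace ℝ (Fin n)) (hv : 0 < h v) (hR : 0 < ballRadius h L v)
    -- `vbar = Π_{X*}(v)` : projection of `v` onto `X*`
    (vbar : EuclideanSpace ℝ (Fin n)) (hvbarmem : vbar ∈ Xstar)
    (hvbarproj : ∀ y ∈ Xstar, ‖v - vbar‖ ≤ ‖v - y‖)
    (hfeas : h vbar ≤ 0)
    (β : ℝ) (hβ : β ∈ Set.Ioo (0 : ℝ) 1)
    (Bh : ℝ) (hBh : 0 < Bh) (hgradbd : ‖gradient h v‖ ≤ Bh)
    (z : EuclideanSpace ℝ (Fin n))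
    (hz : z = v - (β * (h v / adaptP h L v)) • gradient h v)
    -- `xplus = Π_Y(z)` : projection of `z` onto `Y`
    (xplus : EuclideanSpace ℝ (Fin n)) (hxpmem : xplus ∈ Y)
    (hxpproj : ∀ y ∈ Y, ‖z - xplus‖ ≤ ‖z - y‖) :
    (infDist xplus Xstar) ^ 2
      ≤ ‖v - vbar‖ ^ 2 - 2 * β * (1 - β) / Bh ^ 2 * (h v) ^ 2 :=
  stmt_8_general h hconv hdiff L hL Y Xstar hYcv hXsY v hv hR vbar hvbarmem hfeas β hβ Bh hgradbd z
    hz xplus hxpmem hxpproj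
end

section
/- (One-step version of Lemma 6 / equation (way) of the paper, strongly convex case.) In the stochastic SMBA setting described below with X* = {x*}, let β ∈ (0,1), μ > 0, let x ∈ Y, set w = Π_X(x), let α ≥ 0, let g ∈ ℝⁿ satisfy f(y) ≥ f(x) + ⟨g, y − x⟩ + (μ/2)‖y − x‖² for all y ∈ Y with ‖g‖ ≤ B_f, let ḡ ∈ ℝⁿ satisfy f(y) ≥ f(w) + ⟨ḡ, y − w⟩ for all y ∈ Y with ‖ḡ‖ ≤ B̄_f, and assume the quadratic growth property f(y) − f(x*) ≥ (μ/2)‖y − x*‖² for all y ∈ X. Set v = Π_Y(x − α·g) and Ĉ = (2c𝓑²/(β(1 − β)))·B̄_f² + (1 + 2β(1 − β)/(c𝓑²))·B_f². Then ∫_Ω ‖x⁺(ξ) − x*‖² dP(ξ) ≤ (1 − μα)‖x − x*‖² − μα·‖w − x*‖² − (β(1 − β)/(2c𝓑²))·dist²(x, X) + Ĉ·α². -/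
/-!
The feasibility step is a relaxed Polyak step: with a = ‖∇h(v,ξ)‖ and b = h(v,ξ)·L_ξ > 0, the
SMBA step size equals τ = (1 − s/a)/L_ξ where s = √((a² − 2b)₊), and it satisfies
τ·a² ≤ 2h(v,ξ) and τ ≥ h(v,ξ)/𝓑². Since h(·,ξ) is convex and h(x*,ξ) ≤ 0, the gradient
inequality gives h(v,ξ) ≤ ⟨∇h(v,ξ), v − x*⟩, so the step decreases ‖· − x*‖² by at least
2β(1 − β)·(h(v,ξ))₊²/𝓑², and projecting onto Y does not undo this. Taking expectations and using
linear regularity, the decrease is at least 2β(1 − β)/(c𝓑²)·dist²(v, X).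

The projected subgradient step x ↦ v gives, by strong convexity at x, the subgradient at w and
quadratic growth, ‖v − x*‖² ≤ (1 − μα)‖x − x*‖² − μα‖w − x*‖² + 2αB̄_f·dist(x, X) + α²B_f².
Finally dist(v, X) ≥ dist(x, X) − αB_f, and Young's inequality absorbs the cross term
2αB̄_f·dist(x, X) into half of the gained −dist²(x, X) term.
-/

open Metric MeasureTheory
open scoped RealInnerProductSpace

open Set

theorem infDist_eq_norm_sub_of_isMinOn {E : Type*} [SeminormedAddCommGroup E] {s : Set E}
    {x w : E} (hw : w ∈ s) (hmin : IsMinOn (fun y => ‖x - y‖) s w) : infDist x s = ‖x - w‖ :=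
  le_antisymm ((infDist_le_dist_of_mem hw).trans_eq (dist_eq_norm x w))
    ((le_infDist ⟨w, hw⟩).2 fun y hy => (dist_eq_norm x y).symm ▸ isMinOn_iff.1 hmin y hy)

section InnerProductSpace

variable {E : Type*} [NormedAddCommGroup E] [InnerProductSpace ℝ E]

theorem Convex.norm_sub_le_of_isMinOn {K : Set E} (hK : Convex ℝ K) {z p u : E}
    (hp : p ∈ K) (hmin : IsMinOn (fun y => ‖z - y‖) K p) (hu : u ∈ K) :
    ‖p - u‖ ≤ ‖z - u‖ := by
  have : Nonempty K := ⟨⟨p, hp⟩⟩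
  have hinf : ‖z - p‖ = ⨅ y : K, ‖z - y‖ :=
    le_antisymm (le_ciInf fun y => isMinOn_iff.1 hmin y y.2)
      (ciInf_le ⟨0, by rintro _ ⟨y, rfl⟩; positivity⟩ (⟨p, hp⟩ : K))
  have hobtuse : ⟪z - p, u - p⟫ ≤ 0 :=
    (norm_eq_iInf_iff_real_inner_le_zero hK hp).1 hinf u hu
  have hsq : ‖p - u‖ ^ 2 ≤ ‖z - u‖ ^ 2 := by
    have := norm_sub_sq_real (z - p) (u - p)
    rw [sub_sub_sub_cancel_right, norm_sub_rev u p] at this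
    nlinarith [sq_nonneg ‖z - p‖]
  exact (pow_le_pow_iff_left₀ (norm_nonneg _) (norm_nonneg _) two_ne_zero).1 hsq

theorem ConvexOn.add_inner_gradient_le [CompleteSpace E] {φ : E → ℝ} (hφ : ConvexOn ℝ univ φ)
    {a : E} (ha : DifferentiableAt ℝ φ a) (b : E) :
    φ a + ⟪gradient φ a, b - a⟫ ≤ φ b := by
  set ℓ : ℝ →ᵃ[ℝ] E := AffineMap.lineMap a b
  have hline : ConvexOn ℝ univ (φ ∘ ℓ) := by
    simpa using hφ.comp_affineMap ℓ
  have hderiv : HasDerivAt (φ ∘ ℓ) ⟪gradient φ a, b - a⟫ 0 := by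
    have hφa : HasFDerivAt φ (InnerProductSpace.toDual ℝ E (gradient φ a)) (ℓ 0) := by
      simpa [ℓ] using ha.hasGradientAt.hasFDerivAt
    simpa using hφa.comp_hasDerivAt 0 AffineMap.hasDerivAt_lineMap
  have := hline.le_slope_of_hasDerivAt (mem_univ 0) (mem_univ 1) zero_lt_one hderiv
  simp only [slope_def_field, Function.comp_apply, ℓ, AffineMap.lineMap_apply_one,
    AffineMap.lineMap_apply_zero, sub_zero, div_one] at this
  linarith

theorem norm_sub_smul_sub_sq (v u G : E) (t : ℝ) :
    ‖v - t • G - u‖ ^ 2 = ‖v - u‖ ^ 2 - 2 * t * ⟪G, v - u⟫ + t ^ 2 * ‖G‖ ^ 2 := by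
  rw [sub_right_comm, norm_sub_sq_real, real_inner_smul_right, norm_smul, mul_pow,
    Real.norm_eq_abs, sq_abs, real_inner_comm]
  ring

theorem norm_sub_smul_sub_sq_le_s17 {v u G : E} {β τ H : ℝ} (hβ : 0 ≤ β) (hτ : 0 ≤ τ)
    (hH : H ≤ ⟪G, v - u⟫) (hτG : τ * ‖G‖ ^ 2 ≤ 2 * H) :
    ‖v - (β * τ) • G - u‖ ^ 2 ≤ ‖v - u‖ ^ 2 - 2 * β * (1 - β) * τ * H := by
  rw [norm_sub_smul_sub_sq]
  nlinarith [mul_le_mul_of_nonneg_left hH (mul_nonneg hβ hτ),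
    mul_le_mul_of_nonneg_left hτG (mul_nonneg (sq_nonneg β) hτ)]

section ProjectedGradientStep

variable {K : Set E} {x v g : E} {α : ℝ}

theorem sub_le_infDist_of_projGradStep (hK : Convex ℝ K) (hα : 0 ≤ α) (hx : x ∈ K) (hv : v ∈ K)
    (hvmin : IsMinOn (fun y => ‖x - α • g - y‖) K v) (S : Set E) :
    infDist x S - α * ‖g‖ ≤ infDist v S := by
  have := hK.norm_sub_le_of_isMinOn hv hvmin hx
  rw [sub_sub_cancel_left, norm_neg, norm_smul, Real.norm_of_nonneg hα, norm_sub_rev] at this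
  linarith [infDist_le_infDist_add_dist (x := x) (y := v) (s := S), dist_eq_norm x v]

theorem norm_sub_sq_le_of_projGradStep (hK : Convex ℝ K) {f : E → ℝ} {w u gbar : E} {μ : ℝ}
    (hα : 0 ≤ α) (hu : u ∈ K) (hv : v ∈ K) (hvmin : IsMinOn (fun y => ‖x - α • g - y‖) K v)
    (hsg : f x + ⟪g, u - x⟫ + μ / 2 * ‖u - x‖ ^ 2 ≤ f u) (hsgbar : f w + ⟪gbar, x - w⟫ ≤ f x)
    (hQG : μ / 2 * ‖w - u‖ ^ 2 ≤ f w - f u) :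
    ‖v - u‖ ^ 2 ≤ (1 - μ * α) * ‖x - u‖ ^ 2 - μ * α * ‖w - u‖ ^ 2
      + 2 * α * ‖gbar‖ * ‖x - w‖ + α ^ 2 * ‖g‖ ^ 2 := by
  have hstep : ‖v - u‖ ^ 2 ≤ ‖x - α • g - u‖ ^ 2 :=
    pow_le_pow_left₀ (norm_nonneg _) (hK.norm_sub_le_of_isMinOn hv hvmin hu) 2
  rw [norm_sub_smul_sub_sq] at hstep
  have hinner : μ / 2 * ‖x - u‖ ^ 2 + μ / 2 * ‖w - u‖ ^ 2 - ‖gbar‖ * ‖x - w‖ ≤ ⟪g, x - u⟫ := by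
    rw [← neg_sub x u, inner_neg_right, norm_neg] at hsg
    linarith [(neg_le_neg (abs_real_inner_le_norm gbar (x - w))).trans (neg_abs_le _)]
  linear_combination hstep + 2 * α * hinner

end ProjectedGradientStep

end InnerProductSpace

theorem half_sq_sub_sq_le_sq {D t e : ℝ} (hD : 0 ≤ D) (h : D - t ≤ e) :
    D ^ 2 / 2 - t ^ 2 ≤ e ^ 2 := by
  rcases le_or_gt D t with hDt | hDt
  · nlinarith
  · nlinarith [pow_le_pow_left₀ (sub_nonneg.2 hDt.le) h 2, sq_nonneg (D - 2 * t)]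

/- With `a = ‖∇φ(v)‖` and `b = φ(v) L`, the SMBA step size is `(1 - s / a) / L` for
`s = √((a² - 2b)₊)` (see `smbaStepSize_eq`). -/
section StepSize

variable {a b : ℝ}

theorem sqrt_max_sq_sub_le (ha : 0 ≤ a) (hb : 0 ≤ b) : √(max (a ^ 2 - 2 * b) 0) ≤ a :=
  Real.sqrt_le_iff.2 ⟨ha, max_le (by linarith) (sq_nonneg a)⟩

theorem one_sub_sqrt_div_nonneg (ha : 0 ≤ a) (hb : 0 ≤ b) :
    0 ≤ 1 - √(max (a ^ 2 - 2 * b) 0) / a :=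
  sub_nonneg.2 (div_le_one_of_le₀ (sqrt_max_sq_sub_le ha hb) ha)

theorem one_sub_sqrt_div_mul_sq_le (ha : 0 ≤ a) (hb : 0 ≤ b) :
    (1 - √(max (a ^ 2 - 2 * b) 0) / a) * a ^ 2 ≤ 2 * b := by
  rcases ha.eq_or_lt with rfl | ha
  · simpa using hb
  set s := √(max (a ^ 2 - 2 * b) 0)
  have hs : s ^ 2 = max (a ^ 2 - 2 * b) 0 := Real.sq_sqrt (le_max_right _ _)
  have hs0 : 0 ≤ s := Real.sqrt_nonneg _
  have hsa : s ≤ a := sqrt_max_sq_sub_le ha.le hb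
  have : (1 - s / a) * a ^ 2 = a ^ 2 - s * a := by field_simp
  nlinarith [le_max_left (a ^ 2 - 2 * b) 0, mul_le_mul_of_nonneg_left hsa hs0]

theorem le_one_sub_sqrt_div_mul_max (ha : 0 ≤ a) (hb : 0 ≤ b) :
    b ≤ (1 - √(max (a ^ 2 - 2 * b) 0) / a) * max (a ^ 2) b := by
  rcases le_or_gt (a ^ 2) (2 * b) with hab | hab
  · simp [max_eq_right (sub_nonpos.2 hab)]
  have ha : 0 < a := by nlinarith
  set s := √(max (a ^ 2 - 2 * b) 0)
  have hs : s ^ 2 = a ^ 2 - 2 * b := by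
    rw [Real.sq_sqrt (le_max_right _ _), max_eq_left (by linarith)]
  have hs0 : 0 ≤ s := Real.sqrt_nonneg _
  have hsa : s ≤ a := sqrt_max_sq_sub_le ha.le hb
  calc b ≤ (1 - s / a) * a ^ 2 := by
        rw [show (1 - s / a) * a ^ 2 = a * (a - s) by field_simp]
        nlinarith [mul_le_mul_of_nonneg_left hsa hs0]
    _ ≤ (1 - s / a) * max (a ^ 2) b :=
        mul_le_mul_of_nonneg_left (le_max_left _ _) (one_sub_sqrt_div_nonneg ha.le hb)

end StepSize

section SMBA

variable {n : ℕ}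

noncomputable def smbaStepSize (φ : EuclideanSpace ℝ (Fin n) → ℝ) (L : ℝ)
    (v : EuclideanSpace ℝ (Fin n)) : ℝ :=
  max (φ v) 0 / adaptP φ L v

noncomputable def smbaStep (φ : EuclideanSpace ℝ (Fin n) → ℝ) (L β : ℝ)
    (v : EuclideanSpace ℝ (Fin n)) : EuclideanSpace ℝ (Fin n) :=
  v - (β * smbaStepSize φ L v) • gradient φ v

variable {φ : EuclideanSpace ℝ (Fin n) → ℝ} {L : ℝ} {v : EuclideanSpace ℝ (Fin n)}

theorem smbaStepSize_of_nonpos (hφ : φ v ≤ 0) : smbaStepSize φ L v = 0 := by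
  simp [smbaStepSize, max_eq_right hφ]

theorem smbaStepSize_eq (hφ : 0 < φ v) (hL : 0 < L) :
    smbaStepSize φ L v =
      (1 - √(max (‖gradient φ v‖ ^ 2 - 2 * (φ v * L)) 0) / ‖gradient φ v‖) / L := by
  have hvc : ‖v - ballCenter φ L v‖ = ‖gradient φ v‖ / L := by
    rw [ballCenter, sub_sub_cancel, norm_smul, Real.norm_of_nonneg (by positivity)]
    ring
  have hr : √(max (ballRadius φ L v) 0) / (‖gradient φ v‖ / L)
      = √(max (‖gradient φ v‖ ^ 2 - 2 * (φ v * L)) 0) / ‖gradient φ v‖ := by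
    have hRL : max (ballRadius φ L v) 0 * L ^ 2
        = max (‖gradient φ v‖ ^ 2 - 2 * (φ v * L)) 0 := by
      rw [max_mul_of_nonneg _ _ (sq_nonneg L), zero_mul, ballRadius]
      congr 1
      field_simp
    rw [div_div_eq_mul_div, ← hRL, Real.sqrt_mul (le_max_right _ _), Real.sqrt_sq hL.le]
  rw [smbaStepSize, adaptP, hvc, hr, max_eq_left hφ.le, div_div_eq_mul_div,
    mul_div_mul_left _ _ hφ.ne']

theorem smbaStepSize_nonneg (hL : 0 < L) : 0 ≤ smbaStepSize φ L v := by
  rcases le_or_gt (φ v) 0 with hφ | hφ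
  · rw [smbaStepSize_of_nonpos hφ]
  · rw [smbaStepSize_eq hφ hL]
    exact div_nonneg (one_sub_sqrt_div_nonneg (norm_nonneg _) (by positivity)) hL.le

theorem smbaStepSize_mul_norm_sq_le (hφ : 0 < φ v) (hL : 0 < L) :
    smbaStepSize φ L v * ‖gradient φ v‖ ^ 2 ≤ 2 * φ v := by
  rw [smbaStepSize_eq hφ hL, div_mul_eq_mul_div, div_le_iff₀ hL]
  linarith [one_sub_sqrt_div_mul_sq_le (norm_nonneg (gradient φ v)) (mul_pos hφ hL).le]

theorem div_le_smbaStepSize {B : ℝ} (hφ : 0 < φ v) (hL : 0 < L) (hB : 0 < B)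
    (hGB : ‖gradient φ v‖ ^ 2 ≤ B) (hφB : φ v * L ≤ B) :
    φ v / B ≤ smbaStepSize φ L v := by
  have hφL : 0 ≤ φ v * L := (mul_pos hφ hL).le
  rw [smbaStepSize_eq hφ hL, div_le_div_iff₀ hB hL]
  exact (le_one_sub_sqrt_div_mul_max (norm_nonneg _) hφL).trans
    (mul_le_mul_of_nonneg_left (max_le hGB hφB) (one_sub_sqrt_div_nonneg (norm_nonneg _) hφL))

theorem norm_smbaStep_sub_sq_le {u : EuclideanSpace ℝ (Fin n)} {β B : ℝ}
    (hconv : ConvexOn ℝ univ φ) (hdiff : DifferentiableAt ℝ φ v) (hu : φ u ≤ 0) (hL : 0 < L)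
    (hβ0 : 0 ≤ β) (hβ1 : β ≤ 1) (hB : 0 < B) (hGB : ‖gradient φ v‖ ^ 2 ≤ B)
    (hφB : φ v * L ≤ B) :
    ‖smbaStep φ L β v - u‖ ^ 2 ≤ ‖v - u‖ ^ 2 - 2 * β * (1 - β) / B * max (φ v) 0 ^ 2 := by
  rcases le_or_gt (φ v) 0 with hφ | hφ
  · simp [smbaStep, smbaStepSize_of_nonpos hφ, max_eq_right hφ]
  have hinner : φ v ≤ ⟪gradient φ v, v - u⟫ := by
    have := hconv.add_inner_gradient_le hdiff u
    rw [← neg_sub v u, inner_neg_right] at this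
    linarith
  have hτ := mul_le_mul_of_nonneg_left (div_le_smbaStepSize hφ hL hB hGB hφB)
    (mul_nonneg (mul_nonneg hβ0 (sub_nonneg.2 hβ1)) hφ.le)
  calc ‖smbaStep φ L β v - u‖ ^ 2
      ≤ ‖v - u‖ ^ 2 - 2 * β * (1 - β) * smbaStepSize φ L v * φ v :=
        norm_sub_smul_sub_sq_le_s17 hβ0 (smbaStepSize_nonneg hL) hinner
          (smbaStepSize_mul_norm_sq_le hφ hL)
    _ ≤ ‖v - u‖ ^ 2 - 2 * β * (1 - β) / B * max (φ v) 0 ^ 2 := by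
        rw [max_eq_left hφ.le]
        linear_combination 2 * hτ

end SMBA

section Expectation

variable {Ω : Type*} [MeasurableSpace Ω] {P : Measure Ω} [IsProbabilityMeasure P]

theorem integral_le_sub_mul_integral {F G : Ω → ℝ} {C k M : ℝ} (hF : Measurable F)
    (hG : Measurable G) (hF0 : ∀ ξ, 0 ≤ F ξ) (hG0 : ∀ ξ, 0 ≤ G ξ) (hGM : ∀ ξ, G ξ ≤ M)
    (hk : 0 ≤ k) (hFG : ∀ ξ, F ξ ≤ C - k * G ξ) :
    ∫ ξ, F ξ ∂P ≤ C - k * ∫ ξ, G ξ ∂P := by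
  have hGi : Integrable G P := Integrable.of_bound hG.aestronglyMeasurable M
    (ae_of_all _ fun ξ => (Real.norm_of_nonneg (hG0 ξ)).trans_le (hGM ξ))
  have hFi : Integrable F P := Integrable.of_bound hF.aestronglyMeasurable C
    (ae_of_all _ fun ξ => by
      rw [Real.norm_of_nonneg (hF0 ξ)]
      nlinarith [hFG ξ, mul_nonneg hk (hG0 ξ)])
  calc ∫ ξ, F ξ ∂P ≤ ∫ ξ, (C - k * G ξ) ∂P :=
        integral_mono hFi ((integrable_const C).sub (hGi.const_mul k)) hFG
    _ = C - k * ∫ ξ, G ξ ∂P := by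
        rw [integral_sub (integrable_const C) (hGi.const_mul k), integral_const,
          integral_const_mul, probReal_univ, one_smul]

theorem integral_norm_sub_sq_le_of_smbaStep {n : ℕ} {h : EuclideanSpace ℝ (Fin n) → Ω → ℝ}
    {u v : EuclideanSpace ℝ (Fin n)} (hconv : ∀ ξ, ConvexOn ℝ univ (fun y => h y ξ))
    (hdiff : ∀ ξ, DifferentiableAt ℝ (fun y => h y ξ) v) {L : Ω → ℝ} (hL : ∀ ξ, 0 < L ξ)
    {Y : Set (EuclideanSpace ℝ (Fin n))} (hY : Convex ℝ Y) (hu : u ∈ Y) (hhu : ∀ ξ, h u ξ ≤ 0)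
    {β B M : ℝ} (hβ0 : 0 ≤ β) (hβ1 : β ≤ 1) (hB : 0 < B)
    (hGB : ∀ ξ, ‖gradient (fun y => h y ξ) v‖ ^ 2 ≤ B) (hhB : ∀ ξ, h v ξ * L ξ ≤ B)
    (hM : ∀ ξ, |h v ξ| ≤ M) {xplus : Ω → EuclideanSpace ℝ (Fin n)} (hxp : ∀ ξ, xplus ξ ∈ Y)
    (hproj : ∀ ξ, IsMinOn (fun y => ‖smbaStep (fun y => h y ξ) (L ξ) β v - y‖) Y (xplus ξ))
    (hmeas1 : Measurable fun ξ => max (h v ξ) 0 ^ 2)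
    (hmeas2 : Measurable fun ξ => ‖xplus ξ - u‖ ^ 2) :
    ∫ ξ, ‖xplus ξ - u‖ ^ 2 ∂P
      ≤ ‖v - u‖ ^ 2 - 2 * β * (1 - β) / B * ∫ ξ, max (h v ξ) 0 ^ 2 ∂P := by
  have hmaxM : ∀ ξ, max (h v ξ) 0 ^ 2 ≤ M ^ 2 := fun ξ =>
    pow_le_pow_left₀ (le_max_right _ _)
      (max_le ((le_abs_self _).trans (hM ξ)) ((abs_nonneg _).trans (hM ξ))) 2
  refine integral_le_sub_mul_integral hmeas2 hmeas1 (fun _ => by positivity)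
    (fun _ => by positivity) hmaxM
    (div_nonneg (mul_nonneg (mul_nonneg zero_le_two hβ0) (sub_nonneg.2 hβ1)) hB.le) fun ξ => ?_
  calc ‖xplus ξ - u‖ ^ 2 ≤ ‖smbaStep (fun y => h y ξ) (L ξ) β v - u‖ ^ 2 :=
        pow_le_pow_left₀ (norm_nonneg _) (hY.norm_sub_le_of_isMinOn (hxp ξ) (hproj ξ) hu) 2
    _ ≤ _ := norm_smbaStep_sub_sq_le (hconv ξ) (hdiff ξ) (hhu ξ) (hL ξ) hβ0 hβ1 hB (hGB ξ) (hhB ξ)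

end Expectation

theorem stmt_17_general {n : ℕ} {Ω : Type*} [MeasurableSpace Ω]
    (P : Measure Ω) [IsProbabilityMeasure P]
    (h : EuclideanSpace ℝ (Fin n) → Ω → ℝ)
    (hconv : ∀ ξ, ConvexOn ℝ Set.univ (fun y => h y ξ))
    (hdiff : ∀ ξ, Differentiable ℝ (fun y => h y ξ))
    (L : Ω → ℝ) (Lmax : ℝ) (hLpos : ∀ ξ, 0 < L ξ) (hLmax : ∀ ξ, L ξ ≤ Lmax)
    (Y : Set (EuclideanSpace ℝ (Fin n)))
    (hYcv : Convex ℝ Y)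
    (X : Set (EuclideanSpace ℝ (Fin n)))
    (hX : X = {y ∈ Y | ∀ ξ, h y ξ ≤ 0})
    -- `X* = {x*}` where `x*` minimizes `f` over `X`
    (f : EuclideanSpace ℝ (Fin n) → ℝ)
    (xstar : EuclideanSpace ℝ (Fin n)) (hxstarX : xstar ∈ X)
    -- linear regularity condition
    (c : ℝ) (hc : 0 < c)
    (hreg : ∀ y ∈ Y, (infDist y X) ^ 2 ≤ c * ∫ ξ, (max (h y ξ) 0) ^ 2 ∂P)
    (β : ℝ) (hβ : β ∈ Set.Ioo (0 : ℝ) 1) (μ : ℝ)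
    (x : EuclideanSpace ℝ (Fin n)) (hx : x ∈ Y)
    -- `w = Π_X(x)` : projection of `x` onto `X`
    (w : EuclideanSpace ℝ (Fin n)) (hwmem : w ∈ X)
    (hwproj : ∀ y ∈ X, ‖x - w‖ ≤ ‖x - y‖)
    (α : ℝ) (hα : 0 ≤ α)
    -- strong-convexity subgradient inequality at `x`
    (g : EuclideanSpace ℝ (Fin n))
    (hsg : ∀ y ∈ Y, f x + ⟪g, y - x⟫ + (μ / 2) * ‖y - x‖ ^ 2 ≤ f y)
    (Bf : ℝ) (hg : ‖g‖ ≤ Bf)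
    -- subgradient of `f` at `w`
    (gbar : EuclideanSpace ℝ (Fin n))
    (hsgbar : ∀ y ∈ Y, f w + ⟪gbar, y - w⟫ ≤ f y)
    (Bbarf : ℝ) (hgbar : ‖gbar‖ ≤ Bbarf)
    -- quadratic growth property
    (hQG : ∀ y ∈ X, (μ / 2) * ‖y - xstar‖ ^ 2 ≤ f y - f xstar)
    -- `v = Π_Y(x - α g)` : projection of `x - α g` onto `Y`
    (v : EuclideanSpace ℝ (Fin n)) (hvY : v ∈ Y)
    (hvproj : ∀ y ∈ Y, ‖x - α • g - v‖ ≤ ‖x - α • g - y‖)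
    -- bounds at the point `v`
    (Bh Mh : ℝ) (hBh : 0 < Bh)
    (hgradbd : ∀ ξ, ‖gradient (fun u => h u ξ) v‖ ≤ Bh)
    (hhbd : ∀ ξ, |h v ξ| ≤ Mh)
    (B2 : ℝ) (hB2 : B2 = max (Bh ^ 2) (Mh * Lmax))
    (Chat : ℝ)
    (hChat : Chat = 2 * c * B2 / (β * (1 - β)) * Bbarf ^ 2
        + (1 + 2 * β * (1 - β) / (c * B2)) * Bf ^ 2)
    -- the SMBA feasibility step (division by zero interpreted as zero)
    (z : Ω → EuclideanSpace ℝ (Fin n))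
    (hz : ∀ ξ, z ξ = v - (β * (max (h v ξ) 0 / adaptP (fun u => h u ξ) (L ξ) v))
        • gradient (fun u => h u ξ) v)
    -- `xplus ξ = Π_Y(z ξ)` : projection of `z ξ` onto `Y`
    (xplus : Ω → EuclideanSpace ℝ (Fin n)) (hxpY : ∀ ξ, xplus ξ ∈ Y)
    (hxpproj : ∀ ξ, ∀ y ∈ Y, ‖z ξ - xplus ξ‖ ≤ ‖z ξ - y‖)
    -- measurability assumptions
    (hmeas1 : Measurable fun ξ => (max (h v ξ) 0) ^ 2)
    (hmeas2 : Measurable fun ξ => ‖xplus ξ - xstar‖ ^ 2) :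
    ∫ ξ, ‖xplus ξ - xstar‖ ^ 2 ∂P
      ≤ (1 - μ * α) * ‖x - xstar‖ ^ 2 - μ * α * ‖w - xstar‖ ^ 2
        - β * (1 - β) / (2 * c * B2) * (infDist x X) ^ 2 + Chat * α ^ 2 := by
  obtain ⟨hβ0, hβ1⟩ := hβ
  obtain ⟨hxstarY, hxstar⟩ : xstar ∈ Y ∧ ∀ ξ, h xstar ξ ≤ 0 := by simpa [hX] using hxstarX
  have hB2pos : 0 < B2 := hB2 ▸ (pow_pos hBh 2).trans_le (le_max_left _ _)
  have hhL : ∀ ξ, h v ξ * L ξ ≤ B2 := fun ξ =>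
    calc h v ξ * L ξ ≤ |h v ξ| * L ξ := mul_le_mul_of_nonneg_right (le_abs_self _) (hLpos ξ).le
      _ ≤ Mh * Lmax := mul_le_mul (hhbd ξ) (hLmax ξ) (hLpos ξ).le ((abs_nonneg _).trans (hhbd ξ))
      _ ≤ B2 := hB2 ▸ le_max_right _ _
  have hfeas := integral_norm_sub_sq_le_of_smbaStep (P := P) hconv
    (fun ξ => (hdiff ξ).differentiableAt) hLpos hYcv hxstarY hxstar hβ0.le hβ1.le hB2pos
    (fun ξ => (pow_le_pow_left₀ (norm_nonneg _) (hgradbd ξ) 2).trans (hB2 ▸ le_max_left _ _))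
    hhL hhbd hxpY (fun ξ => (show z ξ = smbaStep (fun u => h u ξ) (L ξ) β v from hz ξ) ▸ hxpproj ξ)
    hmeas1 hmeas2
  have hopt := norm_sub_sq_le_of_projGradStep hYcv hα hxstarY hvY hvproj
    (hsg xstar hxstarY) (hsgbar x hx) (hQG w hwmem)
  have hD := infDist_eq_norm_sub_of_isMinOn hwmem hwproj
  have hdist : ‖x - w‖ - α * Bf ≤ infDist v X := by
    linarith [hD ▸ sub_le_infDist_of_projGradStep hYcv hα hx hvY hvproj X,
      mul_le_mul_of_nonneg_left hg hα]
  obtain ⟨κ, hκ⟩ : ∃ κ, κ = β * (1 - β) / (c * B2) := ⟨_, rfl⟩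
  have hκpos : 0 < κ := hκ ▸ div_pos (mul_pos hβ0 (sub_pos.2 hβ1)) (mul_pos hc hB2pos)
  have hreg_v : 2 * κ * infDist v X ^ 2 ≤ 2 * β * (1 - β) / B2 * ∫ ξ, max (h v ξ) 0 ^ 2 ∂P :=
    calc 2 * κ * infDist v X ^ 2 ≤ 2 * κ * (c * ∫ ξ, max (h v ξ) 0 ^ 2 ∂P) :=
          mul_le_mul_of_nonneg_left (hreg v hvY) (by linarith)
      _ = _ := by rw [hκ]; field_simp
  have hdist_sq := mul_le_mul_of_nonneg_left (half_sq_sub_sq_le_sq (norm_nonneg _) hdist)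
    (by linarith : 0 ≤ 2 * κ)
  have hyoung := two_mul_le_add_mul_sq (a := ‖x - w‖) (b := α * Bbarf) (half_pos hκpos)
  have hgbarα := mul_le_mul_of_nonneg_left hgbar (by positivity : 0 ≤ 2 * α * ‖x - w‖)
  have hgα := mul_le_mul_of_nonneg_left (pow_le_pow_left₀ (norm_nonneg g) hg 2) (sq_nonneg α)
  rw [hD, hChat, show β * (1 - β) / (2 * c * B2) = κ / 2 by rw [hκ]; ring,
    show 2 * c * B2 / (β * (1 - β)) = 2 / κ by rw [hκ, div_div_eq_mul_div]; ring,
    show 2 * β * (1 - β) / (c * B2) = 2 * κ by rw [hκ]; ring]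
  linear_combination hfeas + hreg_v + hopt + hgbarα + hgα + hdist_sq + hyoung

theorem stmt_17 {n : ℕ} {Ω : Type*} [MeasurableSpace Ω]
    (P : Measure Ω) [IsProbabilityMeasure P]
    (h : EuclideanSpace ℝ (Fin n) → Ω → ℝ)
    (hconv : ∀ ξ, ConvexOn ℝ Set.univ (fun y => h y ξ))
    (hdiff : ∀ ξ, Differentiable ℝ (fun y => h y ξ))
    (L : Ω → ℝ) (Lmax : ℝ) (hLpos : ∀ ξ, 0 < L ξ) (hLmax : ∀ ξ, L ξ ≤ Lmax)
    (hLip : ∀ ξ x y, ‖gradient (fun u => h u ξ) x - gradient (fun u => h u ξ) y‖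
        ≤ L ξ * ‖x - y‖)
    (Y : Set (EuclideanSpace ℝ (Fin n)))
    (hYne : Y.Nonempty) (hYcl : IsClosed Y) (hYcv : Convex ℝ Y)
    (X : Set (EuclideanSpace ℝ (Fin n)))
    (hX : X = {y ∈ Y | ∀ ξ, h y ξ ≤ 0}) (hXne : X.Nonempty)
    -- `X* = {x*}` where `x*` minimizes `f` over `X`
    (f : EuclideanSpace ℝ (Fin n) → ℝ)
    (xstar : EuclideanSpace ℝ (Fin n)) (hxstarX : xstar ∈ X)
    (hxstarmin : ∀ y ∈ X, f xstar ≤ f y)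
    -- linear regularity condition
    (c : ℝ) (hc : 0 < c)
    (hreg : ∀ y ∈ Y, (infDist y X) ^ 2 ≤ c * ∫ ξ, (max (h y ξ) 0) ^ 2 ∂P)
    (β : ℝ) (hβ : β ∈ Set.Ioo (0 : ℝ) 1) (μ : ℝ) (hμ : 0 < μ)
    (x : EuclideanSpace ℝ (Fin n)) (hx : x ∈ Y)
    -- `w = Π_X(x)` : projection of `x` onto `X`
    (w : EuclideanSpace ℝ (Fin n)) (hwmem : w ∈ X)
    (hwproj : ∀ y ∈ X, ‖x - w‖ ≤ ‖x - y‖)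
    (α : ℝ) (hα : 0 ≤ α)
    -- strong-convexity subgradient inequality at `x`
    (g : EuclideanSpace ℝ (Fin n))
    (hsg : ∀ y ∈ Y, f x + ⟪g, y - x⟫ + (μ / 2) * ‖y - x‖ ^ 2 ≤ f y)
    (Bf : ℝ) (hg : ‖g‖ ≤ Bf)
    -- subgradient of `f` at `w`
    (gbar : EuclideanSpace ℝ (Fin n))
    (hsgbar : ∀ y ∈ Y, f w + ⟪gbar, y - w⟫ ≤ f y)
    (Bbarf : ℝ) (hgbar : ‖gbar‖ ≤ Bbarf)
    -- quadratic growth property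
    (hQG : ∀ y ∈ X, (μ / 2) * ‖y - xstar‖ ^ 2 ≤ f y - f xstar)
    -- `v = Π_Y(x - α g)` : projection of `x - α g` onto `Y`
    (v : EuclideanSpace ℝ (Fin n)) (hvY : v ∈ Y)
    (hvproj : ∀ y ∈ Y, ‖x - α • g - v‖ ≤ ‖x - α • g - y‖)
    -- bounds at the point `v`
    (Bh Mh : ℝ) (hBh : 0 < Bh) (hMh : 0 < Mh)
    (hgradbd : ∀ ξ, ‖gradient (fun u => h u ξ) v‖ ≤ Bh)
    (hhbd : ∀ ξ, |h v ξ| ≤ Mh)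
    (B2 : ℝ) (hB2 : B2 = max (Bh ^ 2) (Mh * Lmax))
    (Chat : ℝ)
    (hChat : Chat = 2 * c * B2 / (β * (1 - β)) * Bbarf ^ 2
        + (1 + 2 * β * (1 - β) / (c * B2)) * Bf ^ 2)
    -- the SMBA feasibility step (division by zero interpreted as zero)
    (z : Ω → EuclideanSpace ℝ (Fin n))
    (hz : ∀ ξ, z ξ = v - (β * (max (h v ξ) 0 / adaptP (fun u => h u ξ) (L ξ) v))
        • gradient (fun u => h u ξ) v)
    -- `xplus ξ = Π_Y(z ξ)` : projection of `z ξ` onto `Y`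
    (xplus : Ω → EuclideanSpace ℝ (Fin n)) (hxpY : ∀ ξ, xplus ξ ∈ Y)
    (hxpproj : ∀ ξ, ∀ y ∈ Y, ‖z ξ - xplus ξ‖ ≤ ‖z ξ - y‖)
    -- measurability assumptions
    (hmeas1 : Measurable fun ξ => (max (h v ξ) 0) ^ 2)
    (hmeas2 : Measurable fun ξ => ‖xplus ξ - xstar‖ ^ 2) :
    ∫ ξ, ‖xplus ξ - xstar‖ ^ 2 ∂P
      ≤ (1 - μ * α) * ‖x - xstar‖ ^ 2 - μ * α * ‖w - xstar‖ ^ 2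
        - β * (1 - β) / (2 * c * B2) * (infDist x X) ^ 2 + Chat * α ^ 2 :=
  stmt_17_general P h hconv hdiff L Lmax hLpos hLmax Y hYcv X hX f xstar hxstarX c hc hreg β hβ μ x
    hx w hwmem hwproj α hα g hsg Bf hg gbar hsgbar Bbarf hgbar hQG v hvY hvproj Bh Mh hBh hgradbd
    hhbd B2 hB2 Chat hChat z hz xplus hxpY hxpproj hmeas1 hmeas2
end
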